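/- For a Haar-random unitary U ∈ U(N) and integers N ≥ 2, ∫_{U(N)} Tr(U²) dU = 0 and ∫_{U(N)} |Tr(U²)|² dU = 2. -/

import Mathlib

open MeasureTheory Matrix

noncomputable instance unitaryGroupMeasurableSpace (N : ℕ) :
    MeasurableSpace (Matrix.unitaryGroup (Fin N) ℂ) := borel _

/-!
Fix column indices `j l q s` and view `T i k p r = 𝔼[U i j * U k l * conj (U p q) * conj (U r s)]`
as a tensor in the row indices. Left invariance of `μ` makes `T` invariant under
`T ↦ (g ⊗ g ⊗ ḡ ⊗ ḡ) T` for every unitary `g`. Diagonal unitaries force `T i k p r = 0` unless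
`{p, r} = {i, k}` as multisets, permutation matrices make the surviving entries depend only on
the pattern of equalities, and one Householder reflection mixing two coordinates gives
`T x x x x = T x y x y + T x y y x`. Hence `T i k p r = α δ_pi δ_rk + β δ_pk δ_ri`.
Expanding `|Tr U²|² = ∑ U i k * U k i * conj (U p r) * conj (U r p)` and using this shape, the
expectation collapses to `2 𝔼[(∑ₖ |U x k|²) (∑ᵢ |U y i|²)] = 2`, since rows of a unitary have
norm one. The first moment vanishes because `Tr((iU)²) = -Tr(U²)`.
-/

open ComplexConjugate Finset

theorem Equiv.Perm.exists_apply_eq_apply_eq {n : Type*} [DecidableEq n] {x y i k : n}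
    (hxy : x ≠ y) (hik : i ≠ k) : ∃ σ : Equiv.Perm n, σ x = i ∧ σ y = k := by
  set τ := Equiv.swap x i
  have hτy : τ y ≠ i := fun h => hxy (τ.injective (h.trans (Equiv.swap_apply_left x i).symm)).symm
  refine ⟨τ.trans (Equiv.swap (τ y) k), ?_, Equiv.swap_apply_left _ _⟩
  simp only [Equiv.trans_apply, τ, Equiv.swap_apply_left]
  exact Equiv.swap_apply_of_ne_of_ne hτy.symm hik

theorem MeasureTheory.integral_finset_sum_of_continuous {X E ι : Type*} [TopologicalSpace X]
    [CompactSpace X] [MeasurableSpace X] [OpensMeasurableSpace X] [NormedAddCommGroup E]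
    [NormedSpace ℝ E] (μ : Measure X) [IsFiniteMeasure μ] (s : Finset ι) {f : ι → X → E}
    (hf : ∀ i ∈ s, Continuous (f i)) : ∫ x, ∑ i ∈ s, f i x ∂μ = ∑ i ∈ s, ∫ x, f i x ∂μ :=
  integral_finsetSum s fun i hi => (hf i hi).integrable_of_hasCompactSupport (.of_compactSpace _)

namespace Matrix

variable {n : Type*} [Fintype n]

def mixedTensorAct (g : Matrix n n ℂ) (T : n → n → n → n → ℂ) (i k p r : n) : ℂ :=
  ∑ d, ∑ c, ∑ b, ∑ a, g i a * g k b * conj (g p c) * conj (g r d) * T a b c d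

def entryTensor (M : Matrix n n ℂ) (j l q s i k p r : n) : ℂ :=
  M i j * M k l * conj (M p q) * conj (M r s)

theorem mixedTensorAct_entryTensor (g M : Matrix n n ℂ) (j l q s : n) :
    mixedTensorAct g (entryTensor M j l q s) = entryTensor (g * M) j l q s := by
  funext i k p r
  simp only [mixedTensorAct, entryTensor, mul_apply, map_sum, map_mul, sum_mul, mul_sum]
  exact sum_congr rfl fun d _ => sum_congr rfl fun c _ => sum_congr rfl fun b _ =>
    sum_congr rfl fun a _ => by ring

variable [DecidableEq n]

def IsUnitaryInvariant (T : n → n → n → n → ℂ) : Prop :=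
  ∀ g ∈ unitaryGroup n ℂ, mixedTensorAct g T = T

theorem diagonal_mem_unitaryGroup {d : n → ℂ} (hd : ∀ t, d t * conj (d t) = 1) :
    diagonal d ∈ unitaryGroup n ℂ := by
  rw [mem_unitaryGroup_iff, star_eq_conjTranspose, diagonal_conjTranspose,
    diagonal_mul_diagonal, ← diagonal_one]
  exact congrArg diagonal (funext hd)

theorem permMatrix_mem_unitaryGroup (σ : Equiv.Perm n) :
    σ.permMatrix ℂ ∈ unitaryGroup n ℂ := by
  rw [mem_unitaryGroup_iff, star_eq_conjTranspose, conjTranspose_permMatrix, ← permMatrix_mul,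
    inv_mul_cancel, permMatrix_one]

def householder (v : n → ℂ) : Matrix n n ℂ := 1 - (2 : ℂ) • vecMulVec v (star v)

theorem householder_mem_unitaryGroup {v : n → ℂ} (hv : star v ⬝ᵥ v = 1) :
    householder v ∈ unitaryGroup n ℂ := by
  have hP : vecMulVec v (star v) * vecMulVec v (star v) = vecMulVec v (star v) := by
    rw [vecMulVec_mul_vecMulVec, hv, one_smul]
  have hstar : star (householder v) = householder v := by
    simp [householder, star_sub, star_smul, star_eq_conjTranspose, conjTranspose_vecMulVec]
  rw [mem_unitaryGroup_iff, hstar, householder, sub_mul, mul_sub, mul_sub, smul_mul_smul_comm, hP]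
  simp only [one_mul, mul_one, mul_smul_comm]
  module

theorem sum_mul_conj_of_mem_unitaryGroup {U : Matrix n n ℂ} (hU : U ∈ unitaryGroup n ℂ)
    (i j : n) : ∑ a, U i a * conj (U j a) = (1 : Matrix n n ℂ) i j := by
  rw [← mem_unitaryGroup_iff.mp hU, mul_apply]
  rfl

theorem exists_mem_unitaryGroup_sum_pow_four_ne_one {x y : n} (hxy : x ≠ y) :
    ∃ g ∈ unitaryGroup n ℂ, ∑ a, (g x a * conj (g x a)) ^ 2 ≠ 1 := by
  set v : n → ℂ := Pi.single x (3 / 5) + Pi.single y (4 / 5)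
  have hv : star v ⬝ᵥ v = 1 := by
    rw [dotProduct, Fintype.sum_eq_add x y hxy (fun c hc => by simp [v, hc.1, hc.2])]
    norm_num [v, hxy, hxy.symm]
  refine ⟨householder v, householder_mem_unitaryGroup hv, ?_⟩
  rw [Fintype.sum_eq_add x y hxy
    (fun c hc => by simp [householder, v, vecMulVec_apply, hc.1, hc.2, Ne.symm hc.1])]
  norm_num [householder, v, vecMulVec_apply, hxy, hxy.symm, map_ofNat]

theorem mixedTensorAct_diagonal (d : n → ℂ) (T : n → n → n → n → ℂ) (i k p r : n) :
    mixedTensorAct (diagonal d) T i k p r = d i * d k * conj (d p) * conj (d r) * T i k p r := by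
  simp [mixedTensorAct, diagonal_apply, apply_ite conj]

theorem mixedTensorAct_permMatrix (σ : Equiv.Perm n) (T : n → n → n → n → ℂ) (i k p r : n) :
    mixedTensorAct (σ.permMatrix ℂ) T i k p r = T (σ i) (σ k) (σ p) (σ r) := by
  simp [mixedTensorAct, PEquiv.toMatrix_apply, apply_ite conj]

namespace IsUnitaryInvariant

variable {T : n → n → n → n → ℂ}

theorem apply_perm (hT : IsUnitaryInvariant T) (σ : Equiv.Perm n) (i k p r : n) :
    T (σ i) (σ k) (σ p) (σ r) = T i k p r := by
  rw [← mixedTensorAct_permMatrix σ T, hT _ (permMatrix_mem_unitaryGroup σ)]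

theorem eq_zero_of_not_pair (hT : IsUnitaryInvariant T) {i k p r : n}
    (h : ¬((p = i ∧ r = k) ∨ (p = k ∧ r = i))) : T i k p r = 0 := by
  by_contra h0
  apply h
  -- the phase `I` placed on coordinate `j` counts how often `j` occurs among `i, k` and `p, r`
  have count : ∀ j : n, ((if i = j then 1 else 0) + (if k = j then 1 else 0) : ℕ) =
      (if p = j then 1 else 0) + (if r = j then 1 else 0) := by
    intro j
    set d : n → ℂ := fun t => if t = j then Complex.I else 1
    have hd : ∀ t, d t * conj (d t) = 1 := fun t => by
      by_cases ht : t = j <;> simp [d, ht]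
    have hphase := mixedTensorAct_diagonal d T i k p r
    rw [hT _ (diagonal_mem_unitaryGroup hd), eq_comm, mul_left_eq_self₀] at hphase
    replace hphase := hphase.resolve_right h0
    split_ifs at hphase ⊢ <;> simp [d, Complex.ext_iff, *] at hphase ⊢ <;> norm_num at hphase
  have := count i; have := count k; have := count p; have := count r
  grind

theorem apply_eq' (hT : IsUnitaryInvariant T) {x y : n} (hxy : x ≠ y) (i k p r : n) :
    T i k p r = (if p = i ∧ r = k then T x y x y else 0) + (if p = k ∧ r = i then T x y y x else 0)
      + (if i = k ∧ p = i ∧ r = i then T x x x x - T x y x y - T x y y x else 0) := by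
  by_cases hik : i = k
  · subst hik
    by_cases hpr : p = i ∧ r = i
    · obtain ⟨rfl, rfl⟩ := hpr
      rw [← hT.apply_perm (Equiv.swap x r) x x x x]
      simp
    · rw [hT.eq_zero_of_not_pair (by tauto)]
      simp [hpr]
  obtain ⟨σ, rfl, rfl⟩ := Equiv.Perm.exists_apply_eq_apply_eq hxy hik
  have hyx : σ y ≠ σ x := Ne.symm hik
  by_cases h₁ : p = σ x ∧ r = σ y
  · obtain ⟨rfl, rfl⟩ := h₁
    simp [hik, hT.apply_perm]
  by_cases h₂ : p = σ y ∧ r = σ x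
  · obtain ⟨rfl, rfl⟩ := h₂
    simp [hik, hyx, hT.apply_perm]
  rw [hT.eq_zero_of_not_pair (by tauto)]
  simp [h₁, h₂, hik]

theorem apply_self_eq_add (hT : IsUnitaryInvariant T) {x y : n} (hxy : x ≠ y) :
    T x x x x = T x y x y + T x y y x := by
  obtain ⟨g, hg, hS⟩ := exists_mem_unitaryGroup_sum_pow_four_ne_one hxy
  have hform := hT.apply_eq' hxy
  have h := congrFun (congrFun (congrFun (congrFun (hT g hg) x) x) x) x
  generalize T x y x y = α at hform ⊢
  generalize T x y y x = β at hform ⊢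
  generalize T x x x x = γ at hform h ⊢
  -- invariance at `(x, x, x, x)` reads `γ = (α + β) (∑ₐ |g x a|²)² + (γ - α - β) ∑ₐ |g x a|⁴`
  simp only [mixedTensorAct, hform] at h
  simp only [ite_and, mul_add, mul_ite, mul_zero, sum_add_distrib, sum_ite_irrel, sum_ite_eq',
    mem_univ, ↓reduceIte, sum_const_zero, sum_ite_eq] at h
  have hrow : ∑ a, g x a * conj (g x a) = 1 := by
    rw [sum_mul_conj_of_mem_unitaryGroup hg, one_apply_eq]
  have hpair : ∀ (c : ℂ) (F : n → n → ℂ),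
      (∀ a b, F a b = g x a * conj (g x a) * (g x b * conj (g x b)) * c) → ∑ a, ∑ b, F a b = c := by
    intro c F hF
    simp_rw [hF, ← Finset.sum_mul, ← Finset.sum_mul_sum, hrow, one_mul]
  have hquad : ∑ a, g x a * g x a * conj (g x a) * conj (g x a) * (γ - α - β) =
      (∑ a, (g x a * conj (g x a)) ^ 2) * (γ - α - β) := by
    rw [Finset.sum_mul]
    exact Finset.sum_congr rfl fun a _ => by ring
  rw [hpair α _ fun a b => by ring, hpair β _ fun a b => by ring, hquad] at h
  have : (γ - α - β) * (∑ a, (g x a * conj (g x a)) ^ 2 - 1) = 0 := by linear_combination h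
  linear_combination (mul_eq_zero.mp this).resolve_right (sub_ne_zero.mpr hS)

theorem apply_eq (hT : IsUnitaryInvariant T) {x y : n} (hxy : x ≠ y) (i k p r : n) :
    T i k p r =
      (if p = i ∧ r = k then T x y x y else 0) + (if p = k ∧ r = i then T x y y x else 0) := by
  rw [hT.apply_eq' hxy, hT.apply_self_eq_add hxy]
  simp

end IsUnitaryInvariant

theorem trace_sq_eq_sum (M : Matrix n n ℂ) : trace (M ^ 2) = ∑ i, ∑ k, M i k * M k i := by
  simp only [trace, diag, sq, mul_apply]

theorem trace_sq_mul_conj_eq_sum (M : Matrix n n ℂ) :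
    trace (M ^ 2) * conj (trace (M ^ 2)) = ∑ i, ∑ k, ∑ p, ∑ r, entryTensor M k i r p i k p r := by
  simp only [trace_sq_eq_sum, map_sum, map_mul, sum_mul_sum, entryTensor]
  refine sum_congr rfl fun i _ => ?_
  rw [sum_comm]
  exact sum_congr rfl fun k _ => sum_congr rfl fun p _ => sum_congr rfl fun r _ => by ring

instance : CompactSpace (unitaryGroup n ℂ) := by
  refine isCompact_iff_compactSpace.mp <|
    (isCompact_univ_pi fun _ => isCompact_univ_pi fun _ => isCompact_closedBall (0 : ℂ) 1)
      |>.of_isClosed_subset (isClosed_unitary (R := Matrix n n ℂ)) fun U hU i _ j _ => ?_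
  simpa using entry_norm_bound_of_unitary hU i j

@[fun_prop]
theorem continuous_unitaryGroup_apply (i j : n) :
    Continuous fun U : unitaryGroup n ℂ => (U : Matrix n n ℂ) i j :=
  (continuous_apply j).comp ((continuous_apply i).comp continuous_subtype_val)

variable [MeasurableSpace (unitaryGroup n ℂ)] [BorelSpace (unitaryGroup n ℂ)]
  (μ : Measure (unitaryGroup n ℂ))

noncomputable def momentTensor (j l q s i k p r : n) : ℂ :=
  ∫ U, entryTensor (U : Matrix n n ℂ) j l q s i k p r ∂μ

theorem isUnitaryInvariant_momentTensor [IsFiniteMeasure μ] [μ.IsMulLeftInvariant]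
    (j l q s : n) : IsUnitaryInvariant (momentTensor μ j l q s) := by
  intro g hg
  funext i k p r
  calc mixedTensorAct g (momentTensor μ j l q s) i k p r
      = ∫ U, mixedTensorAct g (entryTensor (U : Matrix n n ℂ) j l q s) i k p r ∂μ := by
        simp (disch := intro _ _; fun_prop) only [mixedTensorAct, entryTensor, momentTensor,
          integral_finset_sum_of_continuous, integral_const_mul]
    _ = ∫ U, entryTensor ((⟨g, hg⟩ * U : unitaryGroup n ℂ) : Matrix n n ℂ) j l q s i k p r ∂μ := by
        simp only [mixedTensorAct_entryTensor]
        rfl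
    _ = momentTensor μ j l q s i k p r :=
        integral_mul_left_eq_self
          (fun U : unitaryGroup n ℂ => entryTensor (U : Matrix n n ℂ) j l q s i k p r) _

theorem integral_trace_sq_eq_zero [IsFiniteMeasure μ] [μ.IsMulLeftInvariant] :
    ∫ U, trace ((U : Matrix n n ℂ) ^ 2) ∂μ = 0 := by
  let ω : unitaryGroup n ℂ :=
    ⟨Complex.I • 1, by rw [smul_one_eq_diagonal]; exact diagonal_mem_unitaryGroup (by simp)⟩
  have hneg : ∀ U : unitaryGroup n ℂ, trace (((ω * U : unitaryGroup n ℂ) : Matrix n n ℂ) ^ 2) =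
      -trace ((U : Matrix n n ℂ) ^ 2) := by
    intro U
    simp [ω, smul_pow]
  have h := integral_mul_left_eq_self (μ := μ)
    (fun U : unitaryGroup n ℂ => trace ((U : Matrix n n ℂ) ^ 2)) ω
  simp only [hneg, integral_neg] at h
  linear_combination -h / 2

theorem sum_sum_momentTensor_eq_one [IsProbabilityMeasure μ] (x y : n) :
    ∑ i, ∑ k, momentTensor μ k i k i x y x y = 1 := by
  have hrow : ∀ (U : unitaryGroup n ℂ) z,
      ∑ a, (U : Matrix n n ℂ) z a * conj ((U : Matrix n n ℂ) z a) = 1 :=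
    fun U z => by rw [sum_mul_conj_of_mem_unitaryGroup U.2, one_apply_eq]
  have hprod : ∀ U : unitaryGroup n ℂ, ∑ i, ∑ k, (U : Matrix n n ℂ) x k * (U : Matrix n n ℂ) y i *
      conj ((U : Matrix n n ℂ) x k) * conj ((U : Matrix n n ℂ) y i) = 1 := fun U => by
    rw [← one_mul (1 : ℂ)]
    nth_rw 1 [← hrow U y, ← hrow U x, sum_mul_sum]
    exact sum_congr rfl fun i _ => sum_congr rfl fun k _ => by ring
  simp (disch := intro _ _; fun_prop) only [momentTensor, entryTensor,
    ← integral_finset_sum_of_continuous]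
  simp [hprod]

theorem integral_trace_sq_mul_conj [Nontrivial n] [IsProbabilityMeasure μ]
    [μ.IsMulLeftInvariant] :
    ∫ U, trace ((U : Matrix n n ℂ) ^ 2) * conj (trace ((U : Matrix n n ℂ) ^ 2)) ∂μ = 2 := by
  obtain ⟨x, y, hxy⟩ := exists_pair_ne n
  have hswap : ∀ i k, momentTensor μ k i i k x y y x = momentTensor μ k i k i x y x y :=
    fun i k => congrArg (integral μ) <| funext fun U => by simp only [entryTensor]; ring
  calc ∫ U, trace ((U : Matrix n n ℂ) ^ 2) * conj (trace ((U : Matrix n n ℂ) ^ 2)) ∂μ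
      = ∑ i, ∑ k, ∑ p, ∑ r, momentTensor μ k i r p i k p r := by
        simp (disch := intro _ _; fun_prop) only [trace_sq_mul_conj_eq_sum, entryTensor,
          momentTensor, integral_finset_sum_of_continuous]
    _ = ∑ i, ∑ k, (momentTensor μ k i k i x y x y + momentTensor μ k i i k x y y x) := by
        refine sum_congr rfl fun i _ => sum_congr rfl fun k _ => ?_
        have hM : ∀ p r, momentTensor μ k i r p i k p r =
            (if p = i ∧ r = k then momentTensor μ k i r p x y x y else 0) +
              (if p = k ∧ r = i then momentTensor μ k i r p x y y x else 0) :=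
          fun p r => (isUnitaryInvariant_momentTensor μ k i r p).apply_eq hxy i k p r
        simp only [hM, ite_and, sum_add_distrib, sum_ite_irrel, sum_ite_eq', mem_univ, if_true,
          sum_const_zero]
    _ = 2 := by
        simp only [hswap, ← two_mul, ← mul_sum, sum_sum_momentTensor_eq_one, mul_one]

end Matrix

instance (N : ℕ) : BorelSpace (Matrix.unitaryGroup (Fin N) ℂ) := ⟨rfl⟩

/-- For the Haar probability measure on `U(N)`, `N ≥ 2`:
`∫ Tr(U²) dU = 0` and `∫ |Tr(U²)|² dU = 2`. -/
theorem trace_sq_moments (N : ℕ) (hN : 2 ≤ N)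
    (μ : Measure (Matrix.unitaryGroup (Fin N) ℂ)) [IsProbabilityMeasure μ]
    (hinv : ∀ g : Matrix.unitaryGroup (Fin N) ℂ,
      μ.map (fun U => g * U) = μ) :
    (∫ U, Matrix.trace ((U : Matrix (Fin N) (Fin N) ℂ) ^ 2) ∂μ = 0)
    ∧ ∫ U, Matrix.trace ((U : Matrix (Fin N) (Fin N) ℂ) ^ 2) *
          (starRingEnd ℂ) (Matrix.trace ((U : Matrix (Fin N) (Fin N) ℂ) ^ 2)) ∂μ
        = 2 := by
  have : μ.IsMulLeftInvariant := ⟨hinv⟩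
  have : Nontrivial (Fin N) := Fin.nontrivial_iff_two_le.mpr hN
  exact ⟨integral_trace_sq_eq_zero μ, integral_trace_sq_mul_conj μ⟩
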